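/- arXiv:2007.11501 — 3 statements merged into one kernel-verified Lean document; each statement's English description precedes it below -/
import Mathlib

section
/- Any sequence of swap operations, each performed only on blocking pairs, terminates in finitely many steps at a two-sided exchange-stable matching, provided the total utility function takes values in a finite set (e.g., there are finitely many matchings). -/
/-- Any sequence of blocking-pair swaps, each strictly increasing the total
utility over a finite set of matchings, terminates at a two-sided
exchange-stable matching. -/
theorem stmt10 (Φ : Type*) [Fintype Φ] (V : Φ → ℝ)
    (step : Φ → Φ → Prop) (hasBlockingPair : Φ → Prop)
    (hinc : ∀ φ ψ, step φ ψ → V φ < V ψ)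
    (seq : ℕ → Φ)
    (hstep : ∀ t, hasBlockingPair (seq t) → step (seq t) (seq (t + 1)))
    (hstop : ∀ t, ¬ hasBlockingPair (seq t) → seq (t + 1) = seq t) :
    ∃ T, ¬ hasBlockingPair (seq T) ∧ ∀ t, T ≤ t → seq t = seq T := by
  -- First find some T with no blocking pair
  have hT : ∃ T, ¬ hasBlockingPair (seq T) := by
    by_contra h
    push_neg at h
    have hmono : StrictMono (fun t => V (seq t)) := by
      apply strictMono_nat_of_lt_succ
      intro n
      exact hinc _ _ (hstep n (h n))
    have hinj : Function.Injective seq := fun a b hab => by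
      have : V (seq a) = V (seq b) := by rw [hab]
      exact hmono.injective this
    exact not_injective_infinite_finite seq hinj
  obtain ⟨T, hTnb⟩ := hT
  refine ⟨T, hTnb, ?_⟩
  intro t ht
  induction t with
  | zero => rw [Nat.le_zero.mp ht]
  | succ n ih =>
    rcases Nat.lt_or_ge T (n + 1) with hlt | hge
    · have hn : T ≤ n := by omega
      have := ih hn
      rw [hstop n (this ▸ hTnb), this]
    · have : T = n + 1 := by omega
      rw [this]
end

section
/- The greedy algorithm for maximizing a monotone submodular set function g with g(∅) = 0 under a cardinality constraint |S| ≤ I achieves a (1 − 1/e)-approximation: if S_greedy is the set produced by I greedy steps (each adding the element with maximal marginal gain) and S* is an optimal set of size at most I, then g(S_greedy) ≥ (1 − 1/e)·g(S*). -/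
open Finset

lemma tel_aux (G : Type*) [DecidableEq G] (g : Finset G → ℝ)
    (hmono : ∀ X Y : Finset G, X ⊆ Y → g X ≤ g Y)
    (hsub : ∀ (X Y : Finset G) (x : G), X ⊆ Y → x ∉ Y →
      g (insert x Y) - g Y ≤ g (insert x X) - g X)
    (B A : Finset G) :
    g (A ∪ B) ≤ g A + ∑ y ∈ B, (g (insert y A) - g A) := by
  induction B using Finset.induction_on with
  | empty => simp
  | @insert b B' hb ih =>
    rw [Finset.sum_insert hb, Finset.union_insert]
    have key : g (insert b (A ∪ B')) ≤ g (A ∪ B') + (g (insert b A) - g A) := by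
      by_cases hbA : b ∈ A ∪ B'
      · rw [Finset.insert_eq_self.2 hbA]
        have := hmono A (insert b A) (Finset.subset_insert b A)
        linarith
      · have := hsub A (A ∪ B') b Finset.subset_union_left hbA
        linarith
    linarith

/-- The greedy algorithm for maximizing a normalized monotone submodular
function under a cardinality constraint `I` achieves a `(1 − 1/e)`
approximation. -/
theorem stmt11 (G : Type*) [Fintype G] [DecidableEq G] [Nonempty G]
    (g : Finset G → ℝ) (hnn : ∀ X, 0 ≤ g X) (h0 : g ∅ = 0)
    (hmono : ∀ X Y : Finset G, X ⊆ Y → g X ≤ g Y)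
    (hsub : ∀ (X Y : Finset G) (x : G), X ⊆ Y → x ∉ Y →
      g (insert x Y) - g Y ≤ g (insert x X) - g X)
    (I : ℕ) (S : ℕ → Finset G) (x : ℕ → G)
    (hS0 : S 0 = ∅)
    (hSstep : ∀ t < I, S (t + 1) = insert (x t) (S t) ∧
      ∀ y : G, g (insert y (S t)) ≤ g (insert (x t) (S t)))
    (Sstar : Finset G) (hcard : Sstar.card ≤ I)
    (hopt : ∀ X : Finset G, X.card ≤ I → g X ≤ g Sstar) :
    (1 - 1 / Real.exp 1) * g Sstar ≤ g (S I) := by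
  rcases Nat.eq_zero_or_pos I with hI0 | hIpos
  · subst hI0
    have : Sstar = ∅ := Finset.card_eq_zero.1 (Nat.le_zero.1 hcard)
    rw [hS0, this, h0]
    norm_num
  have hIR : (0:ℝ) < (I:ℝ) := by exact_mod_cast hIpos
  -- one step contraction
  have step : ∀ t < I, g Sstar - g (S (t+1)) ≤ (1 - 1/(I:ℝ)) * (g Sstar - g (S t)) := by
    intro t ht
    obtain ⟨hins, hmax⟩ := hSstep t ht
    set gain := g (S (t+1)) - g (S t) with hgain
    have hgain_nonneg : 0 ≤ gain := by
      have := hmono (S t) (insert (x t) (S t)) (Finset.subset_insert _ _)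
      rw [hgain, hins]; linarith
    have h1 : g Sstar ≤ g (S t) + (I:ℝ) * gain := by
      have h2 := tel_aux G g hmono hsub Sstar (S t)
      have h3 : ∑ y ∈ Sstar, (g (insert y (S t)) - g (S t)) ≤ (Sstar.card : ℝ) * gain := by
        calc ∑ y ∈ Sstar, (g (insert y (S t)) - g (S t))
            ≤ ∑ _y ∈ Sstar, gain := by
              apply Finset.sum_le_sum
              intro y _
              have := hmax y
              rw [hgain, hins]; linarith
          _ = (Sstar.card : ℝ) * gain := by rw [Finset.sum_const, nsmul_eq_mul]
      have h4 : (Sstar.card : ℝ) * gain ≤ (I:ℝ) * gain := by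
        apply mul_le_mul_of_nonneg_right _ hgain_nonneg
        exact_mod_cast hcard
      have h5 : g Sstar ≤ g (S t ∪ Sstar) := hmono _ _ Finset.subset_union_right
      linarith
    have : g Sstar - g (S t) ≤ (I:ℝ) * gain := by linarith
    rw [hgain] at this
    have expand : (1 - 1/(I:ℝ)) * (g Sstar - g (S t))
        = (g Sstar - g (S t)) - (1/(I:ℝ)) * (g Sstar - g (S t)) := by ring
    have hdiv : (1/(I:ℝ)) * (g Sstar - g (S t)) ≤ g (S (t+1)) - g (S t) := by
      rw [div_mul_eq_mul_div, one_mul, div_le_iff₀ hIR]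
      nlinarith [this]
    linarith
  have hc : 0 ≤ 1 - 1/(I:ℝ) := by
    rw [sub_nonneg, div_le_one hIR]
    exact_mod_cast hIpos
  -- iterate
  have iter : ∀ t ≤ I, g Sstar - g (S t) ≤ (1 - 1/(I:ℝ))^t * g Sstar := by
    intro t
    induction t with
    | zero => intro _; rw [hS0, h0]; simp
    | succ n ih =>
      intro hn
      have hnI : n < I := hn
      have h1 := step n hnI
      have h2 := ih (le_of_lt hnI)
      calc g Sstar - g (S (n+1)) ≤ (1 - 1/(I:ℝ)) * (g Sstar - g (S n)) := h1
        _ ≤ (1 - 1/(I:ℝ)) * ((1 - 1/(I:ℝ))^n * g Sstar) :=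
            mul_le_mul_of_nonneg_left h2 hc
        _ = (1 - 1/(I:ℝ))^(n+1) * g Sstar := by ring
  have hfin := iter I le_rfl
  have hexp : (1 - 1/(I:ℝ))^I ≤ 1 / Real.exp 1 := by
    have h1 : 1 - 1/(I:ℝ) ≤ Real.exp (-(1/(I:ℝ))) := by
      have := Real.add_one_le_exp (-(1/(I:ℝ)))
      linarith
    calc (1 - 1/(I:ℝ))^I ≤ (Real.exp (-(1/(I:ℝ))))^I := pow_le_pow_left₀ hc h1 I
      _ = Real.exp ((-(1/(I:ℝ))) * I) := by rw [← Real.exp_nat_mul]; ring_nf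
      _ = Real.exp (-1) := by
          congr 1
          field_simp
      _ = 1 / Real.exp 1 := by rw [Real.exp_neg]; ring
  have hg : 0 ≤ g Sstar := hnn _
  have : (1 - 1/(I:ℝ))^I * g Sstar ≤ (1 / Real.exp 1) * g Sstar :=
    mul_le_mul_of_nonneg_right hexp hg
  linarith
end

section
/- After I greedy steps on a monotone submodular function g with g(∅)=0 under cardinality constraint I, the gap to optimum satisfies g(S*) − g(S_t) ≤ (1 − 1/I)^t · g(S*) for all t ≤ I, where S_t is the greedy set after t steps and S* is optimal with |S*| ≤ I. -/
open Finset

/-- Gap bound for greedy on a normalized monotone submodular function: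
`g(S*) − g(S_t) ≤ (1 − 1/I)^t · g(S*)` for all `t ≤ I`. -/
theorem stmt12 (G : Type*) [Fintype G] [DecidableEq G] [Nonempty G]
    (g : Finset G → ℝ) (hnn : ∀ X, 0 ≤ g X) (h0 : g ∅ = 0)
    (hmono : ∀ X Y : Finset G, X ⊆ Y → g X ≤ g Y)
    (hsub : ∀ (X Y : Finset G) (x : G), X ⊆ Y → x ∉ Y →
      g (insert x Y) - g Y ≤ g (insert x X) - g X)
    (I : ℕ) (hI : 0 < I) (S : ℕ → Finset G) (x : ℕ → G)
    (hS0 : S 0 = ∅)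
    (hSstep : ∀ t < I, S (t + 1) = insert (x t) (S t) ∧
      ∀ y : G, g (insert y (S t)) ≤ g (insert (x t) (S t)))
    (Sstar : Finset G) (hcard : Sstar.card ≤ I)
    (hopt : ∀ X : Finset G, X.card ≤ I → g X ≤ g Sstar) :
    ∀ t ≤ I, g Sstar - g (S t) ≤ (1 - 1 / (I : ℝ)) ^ t * g Sstar := by
  have hIpos : (0:ℝ) < I := by exact_mod_cast hI
  have hfac0 : (0:ℝ) ≤ 1 - 1 / (I : ℝ) := by
    have : 1 / (I:ℝ) ≤ 1 := by
      rw [div_le_one hIpos]; exact_mod_cast hI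
    linarith
  -- key submodularity sum bound
  have key : ∀ (X T : Finset G),
      g (X ∪ T) - g X ≤ ∑ y ∈ T, (g (insert y X) - g X) := by
    intro X T
    induction T using Finset.induction_on with
    | empty => simp
    | @insert a T' ha ih =>
      rw [Finset.sum_insert ha]
      have h1 : X ∪ insert a T' = insert a (X ∪ T') := by
        ext z; simp [or_left_comm]
      have h2 : g (insert a (X ∪ T')) - g (X ∪ T') ≤ g (insert a X) - g X := by
        by_cases haX : a ∈ X ∪ T'
        · rw [Finset.insert_eq_self.mpr haX]
          have : g X ≤ g (insert a X) := hmono _ _ (Finset.subset_insert _ _)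
          linarith
        · exact hsub X (X ∪ T') a Finset.subset_union_left haX
      rw [h1]; linarith
  intro t
  induction t with
  | zero =>
    intro _
    simp [hS0, h0]
  | succ n ih =>
    intro hn1
    have hn : n < I := hn1
    have ihn := ih (le_of_lt hn)
    obtain ⟨heq, hbest⟩ := hSstep n hn
    set Δ := g (S (n+1)) - g (S n) with hΔ
    have hΔnn : 0 ≤ Δ := by
      have : g (S n) ≤ g (S (n+1)) := by
        rw [heq]; exact hmono _ _ (Finset.subset_insert _ _)
      linarith
    have hgap : g Sstar - g (S n) ≤ (I : ℝ) * Δ := by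
      have h1 : g Sstar ≤ g (S n ∪ Sstar) := hmono _ _ Finset.subset_union_right
      have h2 := key (S n) Sstar
      have h3 : ∑ y ∈ Sstar, (g (insert y (S n)) - g (S n)) ≤ (Sstar.card : ℝ) * Δ := by
        calc ∑ y ∈ Sstar, (g (insert y (S n)) - g (S n))
            ≤ ∑ _y ∈ Sstar, Δ := by
              apply Finset.sum_le_sum
              intro y _
              have := hbest y
              rw [hΔ, heq]; linarith
          _ = (Sstar.card : ℝ) * Δ := by rw [Finset.sum_const, nsmul_eq_mul]
      have h4 : (Sstar.card : ℝ) * Δ ≤ (I : ℝ) * Δ := by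
        apply mul_le_mul_of_nonneg_right _ hΔnn
        exact_mod_cast hcard
      linarith
    have hstep : g Sstar - g (S (n+1)) ≤ (1 - 1 / (I:ℝ)) * (g Sstar - g (S n)) := by
      have hΔge : (g Sstar - g (S n)) / I ≤ Δ := by
        rw [div_le_iff₀ hIpos]; linarith [hgap]
      have : (1 - 1 / (I:ℝ)) * (g Sstar - g (S n))
          = (g Sstar - g (S n)) - (g Sstar - g (S n)) / I := by
        field_simp
      rw [this]; linarith
    calc g Sstar - g (S (n+1)) ≤ (1 - 1 / (I:ℝ)) * (g Sstar - g (S n)) := hstep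
      _ ≤ (1 - 1 / (I:ℝ)) * ((1 - 1 / (I : ℝ)) ^ n * g Sstar) :=
          mul_le_mul_of_nonneg_left ihn hfac0
      _ = (1 - 1 / (I : ℝ)) ^ (n+1) * g Sstar := by ring
end
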